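/- For every integer n ≥ 2, H_{v_n}(1/(n(n−1))) = ln n − (1 − 2/n)·ln(n−1) and ‖v_n(1/(n(n−1)))‖_{1/2} = 4(n−1)/n. Moreover, for every integer n ≥ 3 the point p = 1/(n(n−1)) satisfies the tangency equation for α = 1/2, i.e. (ln n − H_{v_n}(p))·D_{n,1/2}(p) = n − ‖v_n(p)‖_{1/2} at p = 1/(n(n−1)) (note n^{1/(1/2)−1} = n). -/

import Mathlib

open Real

/-- Shannon entropy (natural log, with `0 * log 0 = 0` since `Real.log 0 = 0`). -/
noncomputable def shannonEntropy {n : ℕ} (p : Fin n → ℝ) : ℝ :=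
  -∑ i, p i * Real.log (p i)

/-- ℓ_α-norm of a vector (real power). -/
noncomputable def lNorm {n : ℕ} (α : ℝ) (p : Fin n → ℝ) : ℝ :=
  (∑ i, p i ^ α) ^ (1 / α)

/-- `p` is an `n`-ary probability vector. -/
def IsProbVec {n : ℕ} (p : Fin n → ℝ) : Prop :=
  (∀ i, 0 ≤ p i) ∧ ∑ i, p i = 1

/-- The vector `v_n(q)`: first entry `1 - (n-1)q`, the other `n-1` entries equal `q`. -/
noncomputable def vVec (n : ℕ) (q : ℝ) : Fin n → ℝ :=
  fun i => if (i : ℕ) = 0 then 1 - ((n : ℝ) - 1) * q else q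

/-- The vector `w_n(r)`: first `⌊1/r⌋` entries equal `r`, the next entry is
`1 - ⌊1/r⌋·r`, the remaining entries are `0`. -/
noncomputable def wVec (n : ℕ) (r : ℝ) : Fin n → ℝ :=
  fun i => if (i : ℕ) < ⌊1 / r⌋₊ then r
           else if (i : ℕ) = ⌊1 / r⌋₊ then 1 - (⌊1 / r⌋₊ : ℝ) * r
           else 0

/-- `H_{v_n}(p) = H(v_n(p))`. -/
noncomputable def Hv (n : ℕ) (p : ℝ) : ℝ := shannonEntropy (vVec n p)

/-- The derivative of `‖v_n(p)‖_α` with respect to `H_{v_n}(p)`. -/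
noncomputable def Dva (n : ℕ) (α p : ℝ) : ℝ :=
  (((n : ℝ) - 1) * p ^ α + (1 - ((n : ℝ) - 1) * p) ^ α) ^ (1 / α - 1) *
    ((p ^ (α - 1) - (1 - ((n : ℝ) - 1) * p) ^ (α - 1)) /
      (Real.log (1 - ((n : ℝ) - 1) * p) - Real.log p))

/-- The tangency equation `(ln n − H_{v_n}(p))·D_{n,α}(p) = n^{1/α−1} − ‖v_n(p)‖_α`. -/
def TangencyEq (n : ℕ) (α p : ℝ) : Prop :=
  (Real.log n - Hv n p) * Dva n α p = (n : ℝ) ^ (1 / α - 1) - lNorm α (vVec n p)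

/-! At `p = 1 / (n (n - 1))` the large entry of `v_n(p)` is `a = (n - 1) / n` and the small
entries satisfy `(n - 1) √p = √a`; so `‖v_n(p)‖_{1/2} = (2 √a)²` and the bracket of
`D_{n,1/2}(p)` is `(1/√p - 1/√a) / (2 ln (n - 1)) = (n - 2) / (2 √a ln (n - 1))`, which turns
both sides of the tangency equation into `(n - 2)² / n`. -/

section vVec

variable {n : ℕ}

lemma sum_vVec_apply (hn : 1 ≤ n) (q : ℝ) (f : ℝ → ℝ) :
    ∑ i, f (vVec n q i) = f (1 - ((n : ℝ) - 1) * q) + ((n : ℝ) - 1) * f q := by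
  obtain ⟨m, rfl⟩ : ∃ m, n = m + 1 := ⟨n - 1, by omega⟩
  simp only [vVec, Fin.sum_univ_succ, Fin.val_zero, if_true, Fin.val_succ, Nat.succ_ne_zero,
    if_false, Finset.sum_const, Finset.card_univ, Fintype.card_fin, nsmul_eq_mul]
  push_cast
  ring

lemma Hv_eq (hn : 1 ≤ n) (q : ℝ) :
    Hv n q = -((1 - ((n : ℝ) - 1) * q) * log (1 - ((n : ℝ) - 1) * q) +
      ((n : ℝ) - 1) * (q * log q)) := by
  rw [Hv, shannonEntropy, sum_vVec_apply hn q fun x => x * log x]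

lemma lNorm_half_vVec (hn : 1 ≤ n) (q : ℝ) :
    lNorm (1 / 2) (vVec n q) = (√(1 - ((n : ℝ) - 1) * q) + ((n : ℝ) - 1) * √q) ^ 2 := by
  rw [lNorm, sum_vVec_apply hn q fun x => x ^ ((1 : ℝ) / 2), ← sqrt_eq_rpow, ← sqrt_eq_rpow,
    one_div_one_div, rpow_two]

lemma Dva_half {q : ℝ} (hq : 0 ≤ q) (hq' : 0 ≤ 1 - ((n : ℝ) - 1) * q) :
    Dva n (1 / 2) q = (((n : ℝ) - 1) * √q + √(1 - ((n : ℝ) - 1) * q)) *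
      (((√q)⁻¹ - (√(1 - ((n : ℝ) - 1) * q))⁻¹) /
        (log (1 - ((n : ℝ) - 1) * q) - log q)) := by
  rw [Dva, one_div_one_div, show (2 : ℝ) - 1 = 1 by norm_num, rpow_one,
    show (1 : ℝ) / 2 - 1 = -(1 / 2) by norm_num, rpow_neg hq, rpow_neg hq']
  simp only [← sqrt_eq_rpow]

end vVec

noncomputable def tangencyPoint (N : ℝ) : ℝ := 1 / (N * (N - 1))

section tangencyPoint

variable {N : ℝ}

lemma sub_one_mul_tangencyPoint (hN : 1 < N) : (N - 1) * tangencyPoint N = 1 / N := by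
  have : N - 1 ≠ 0 := by linarith
  rw [tangencyPoint]
  field_simp

lemma one_sub_sub_one_mul_tangencyPoint (hN : 1 < N) :
    1 - (N - 1) * tangencyPoint N = (N - 1) / N := by
  have : N ≠ 0 := by linarith
  rw [sub_one_mul_tangencyPoint hN]
  field_simp

lemma log_tangencyPoint (hN : 1 < N) : log (tangencyPoint N) = -(log N + log (N - 1)) := by
  rw [tangencyPoint, one_div, log_inv, log_mul (by linarith) (by linarith)]

lemma sub_one_mul_sqrt_tangencyPoint (hN : 1 < N) :
    (N - 1) * √(tangencyPoint N) = √((N - 1) / N) := by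
  have : N - 1 ≠ 0 := by linarith
  calc (N - 1) * √(tangencyPoint N) = √((N - 1) ^ 2 * tangencyPoint N) := by
        rw [sqrt_mul (sq_nonneg _), sqrt_sq (by linarith)]
    _ = √((N - 1) / N) := by
        rw [tangencyPoint]
        congr 1
        field_simp

end tangencyPoint

lemma Hv_tangencyPoint {n : ℕ} (hn : 2 ≤ n) :
    Hv n (tangencyPoint n) = log n - (1 - 2 / (n : ℝ)) * log ((n : ℝ) - 1) := by
  have hN : (1 : ℝ) < n := by exact_mod_cast hn
  have hN0 : (n : ℝ) ≠ 0 := by positivity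
  rw [Hv_eq (by omega), one_sub_sub_one_mul_tangencyPoint hN, log_div (by linarith) hN0,
    ← mul_assoc, sub_one_mul_tangencyPoint hN, log_tangencyPoint hN]
  field_simp
  ring

lemma lNorm_half_vVec_tangencyPoint {n : ℕ} (hn : 2 ≤ n) :
    lNorm (1 / 2) (vVec n (tangencyPoint n)) = 4 * ((n : ℝ) - 1) / n := by
  have hN : (1 : ℝ) < n := by exact_mod_cast hn
  rw [lNorm_half_vVec (by omega), sub_one_mul_sqrt_tangencyPoint hN,
    one_sub_sub_one_mul_tangencyPoint hN, ← two_mul, mul_pow, sq_sqrt (by positivity)]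
  ring

lemma Dva_half_tangencyPoint {n : ℕ} (hn : 3 ≤ n) :
    Dva n (1 / 2) (tangencyPoint n) = ((n : ℝ) - 2) / log ((n : ℝ) - 1) := by
  have hn' : (3 : ℝ) ≤ n := by exact_mod_cast hn
  have hN : (1 : ℝ) < n := by linarith
  have hL : log ((n : ℝ) - 1) ≠ 0 := (log_pos (by linarith)).ne'
  have hN1 : (n : ℝ) - 1 ≠ 0 := by linarith
  have hs : √(((n : ℝ) - 1) / n) ≠ 0 := (sqrt_pos.2 (by positivity)).ne'
  have hsqrt : √(tangencyPoint n) = √(((n : ℝ) - 1) / n) / ((n : ℝ) - 1) := by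
    rw [← sub_one_mul_sqrt_tangencyPoint hN]
    field_simp
  rw [Dva_half (by unfold tangencyPoint; positivity)
      (by rw [one_sub_sub_one_mul_tangencyPoint hN]; positivity),
    one_sub_sub_one_mul_tangencyPoint hN, log_tangencyPoint hN,
    log_div (by linarith) (by positivity), hsqrt,
    show log ((n : ℝ) - 1) - log n - -(log n + log ((n : ℝ) - 1)) = 2 * log ((n : ℝ) - 1) by ring]
  field_simp
  ring

lemma tangencyEq_half_tangencyPoint {n : ℕ} (hn : 3 ≤ n) : TangencyEq n (1 / 2) (tangencyPoint n) := by
  have hn' : (3 : ℝ) ≤ n := by exact_mod_cast hn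
  have hL : log ((n : ℝ) - 1) ≠ 0 := (log_pos (by linarith)).ne'
  rw [TangencyEq, Hv_tangencyPoint (by omega), lNorm_half_vVec_tangencyPoint (by omega),
    Dva_half_tangencyPoint hn, one_div_one_div, show (2 : ℝ) - 1 = 1 by norm_num, rpow_one]
  field_simp
  ring

theorem stmt14 (n : ℕ) (hn : 2 ≤ n) :
    Hv n (1 / ((n : ℝ) * ((n : ℝ) - 1))) =
      Real.log n - (1 - 2 / (n : ℝ)) * Real.log ((n : ℝ) - 1) ∧
    lNorm (1 / 2) (vVec n (1 / ((n : ℝ) * ((n : ℝ) - 1)))) = 4 * ((n : ℝ) - 1) / (n : ℝ) ∧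
    (3 ≤ n → TangencyEq n (1 / 2) (1 / ((n : ℝ) * ((n : ℝ) - 1)))) :=
  ⟨Hv_tangencyPoint hn, lNorm_half_vVec_tangencyPoint hn, tangencyEq_half_tangencyPoint⟩
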